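/- arXiv:2412.09837 — 2 statements merged into one kernel-verified Lean document; each statement's English description precedes it below -/
import Mathlib

section
/- If G and H are finite connected graphs of order at least three that both contain at least one leaf, then mp(G □ H) ≥ max{Δ₁(G), Δ₁(H)}, where Δ₁(G) is the maximum, over all vertices u of G, of the number of leaves of G adjacent to u. -/
open SimpleGraph

/-- A walk is *monophonic* if it is an induced path: it is a path and the only
edges of the graph between vertices of the walk are the edges of the walk. -/
def SimpleGraph.Walk.IsMonophonic {V : Type*} {G : SimpleGraph V} {u v : V}
    (p : G.Walk u v) : Prop :=
  p.IsPath ∧ ∀ a b : V, a ∈ p.support → b ∈ p.support → G.Adj a b → p.toSubgraph.Adj a b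

/-- A set `S` is a *monophonic position set* if no monophonic path contains
more than two vertices of `S`. -/
def SimpleGraph.IsMPSet {V : Type*} (G : SimpleGraph V) (S : Set V) : Prop :=
  ∀ ⦃u v : V⦄ (p : G.Walk u v), p.IsMonophonic → ({x ∈ S | x ∈ p.support}).ncard ≤ 2

/-- The *monophonic position number*: the largest cardinality of a monophonic
position set. -/
noncomputable def SimpleGraph.mpNum {V : Type*} (G : SimpleGraph V) : ℕ :=
  sSup {n | ∃ S : Set V, G.IsMPSet S ∧ S.ncard = n}

/-- A vertex is a *leaf* if it has exactly one neighbour. -/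
def SimpleGraph.IsLeaf {V : Type*} (G : SimpleGraph V) (w : V) : Prop :=
  (G.neighborSet w).ncard = 1

/-- `Δ₁(G)`: the maximum, over vertices `u`, of the number of leaves adjacent to `u`. -/
noncomputable def SimpleGraph.maxLeafDegree {V : Type*} [Fintype V] (G : SimpleGraph V) : ℕ :=
  Finset.univ.sup fun u : V => ({w : V | G.Adj u w ∧ G.IsLeaf w}).ncard

/-! Fix a vertex `u` of `G`, a leaf `y` of `H` with neighbour `y'`, and put `S = {(w, y)}` for the
leaves `w` of `G` adjacent to `u`. Every vertex of `S` is adjacent to the hub `(u, y)`, and its only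
other neighbour is `(w, y')`. An induced path through the hub meets `S` only in path-neighbours of
the hub, hence in at most two vertices; a path avoiding the hub has at most one path-neighbour at
each vertex of `S`, so those vertices are endpoints. Thus `S` is a monophonic position set of
`G □ H` of size `ℓ(u)`, and symmetrically for `H`. -/

namespace SimpleGraph

section

variable {V : Type*} {G : SimpleGraph V}

namespace Walk.IsPath

variable {u v : V} {p : G.Walk u v}

lemma ncard_neighborSet_toSubgraph_le_two (hp : p.IsPath) (x : V) :
    (p.toSubgraph.neighborSet x).ncard ≤ 2 := by
  rcases (p.toSubgraph.neighborSet x).eq_empty_or_nonempty with h | ⟨w, hw⟩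
  · simp [h]
  have hnil : ¬ p.Nil := by
    obtain ⟨i, -, hi⟩ := p.toSubgraph_adj_iff.mp hw
    exact not_nil_iff_lt_length.mpr (by omega)
  obtain ⟨i, rfl, hi⟩ :=
    mem_support_iff_exists_getVert.mp (p.mem_verts_toSubgraph.mp hw.fst_mem)
  rcases Nat.eq_zero_or_pos i with rfl | hi0
  · simp [hp.neighborSet_toSubgraph_startpoint hnil]
  rcases hi.lt_or_eq with hlt | rfl
  · exact (hp.ncard_neighborSet_toSubgraph_internal_eq_two hi0.ne' hlt).le
  · simp [hp.neighborSet_toSubgraph_endpoint hnil]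

lemma eq_or_eq_of_ncard_neighborSet_toSubgraph_lt_two {x : V} (hp : p.IsPath)
    (hx : x ∈ p.support) (h : (p.toSubgraph.neighborSet x).ncard < 2) : x = u ∨ x = v := by
  obtain ⟨i, rfl, hi⟩ := mem_support_iff_exists_getVert.mp hx
  rcases Nat.eq_zero_or_pos i with rfl | hi0
  · exact .inl p.getVert_zero
  rcases hi.lt_or_eq with hlt | rfl
  · exact absurd (hp.ncard_neighborSet_toSubgraph_internal_eq_two hi0.ne' hlt) h.ne
  · exact .inr p.getVert_length

end Walk.IsPath

theorem isMPSet_of_subset_neighborSet {c : V} {S : Set V} (hS : S ⊆ G.neighborSet c)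
    (hdeg : ∀ s ∈ S, ∃ d, G.neighborSet s ⊆ {c, d}) : G.IsMPSet S := by
  rintro u v p ⟨hpath, hind⟩
  by_cases hc : c ∈ p.support
  · calc _ ≤ (p.toSubgraph.neighborSet c).ncard :=
          Set.ncard_le_ncard (fun s hs => hind c s hc hs.2 (hS hs.1))
            p.finite_neighborSet_toSubgraph
      _ ≤ 2 := hpath.ncard_neighborSet_toSubgraph_le_two c
  · have hend : {x ∈ S | x ∈ p.support} ⊆ {u, v} := by
      rintro s ⟨hsS, hsp⟩
      obtain ⟨d, hd⟩ := hdeg s hsS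
      have hpd : p.toSubgraph.neighborSet s ⊆ {d} := fun t ht => by
        rcases hd (p.toSubgraph.adj_sub ht) with rfl | h
        · exact absurd (p.mem_verts_toSubgraph.mp ht.snd_mem) hc
        · exact h
      exact hpath.eq_or_eq_of_ncard_neighborSet_toSubgraph_lt_two hsp
        ((Set.ncard_le_ncard hpd).trans_lt (by simp))
    calc _ ≤ ({u, v} : Set V).ncard := Set.ncard_le_ncard hend
      _ ≤ 2 := (Set.ncard_insert_le u {v}).trans (by simp)

theorem IsMPSet.ncard_le_mpNum [Finite V] {S : Set V} (h : G.IsMPSet S) : S.ncard ≤ G.mpNum :=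
  le_csSup ⟨Nat.card V, by rintro n ⟨T, -, rfl⟩; exact T.ncard_le_card⟩ ⟨S, h, rfl⟩

theorem IsLeaf.neighborSet_eq_singleton {w u : V} (hw : G.IsLeaf w) (h : G.Adj w u) :
    G.neighborSet w = {u} := by
  obtain ⟨u', hu'⟩ := Set.ncard_eq_one.mp hw
  have hu : u ∈ G.neighborSet w := h
  rw [hu', Set.mem_singleton_iff] at hu
  rw [hu', hu]

end

variable {α β : Type*} {G : SimpleGraph α} {H : SimpleGraph β}

theorem neighborSet_boxProd_of_eq_singleton {a a' : α} {b b' : β}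
    (ha : G.neighborSet a = {a'}) (hb : H.neighborSet b = {b'}) :
    (G □ H).neighborSet (a, b) = {(a', b), (a, b')} := by
  rw [neighborSet_boxProd, ha, hb, Set.singleton_prod_singleton, Set.singleton_prod_singleton,
    Set.singleton_union]

theorem isMPSet_boxProd_image_leaves_left {y y' : β} (hy : H.neighborSet y = {y'}) (u : α) :
    (G □ H).IsMPSet ((·, y) '' {w | G.Adj u w ∧ G.IsLeaf w}) := by
  refine isMPSet_of_subset_neighborSet (c := (u, y)) ?_ ?_
  · rintro _ ⟨w, ⟨huw, -⟩, rfl⟩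
    exact boxProd_adj_left.mpr huw
  · rintro _ ⟨w, ⟨huw, hw⟩, rfl⟩
    exact ⟨(w, y'), (neighborSet_boxProd_of_eq_singleton
      (hw.neighborSet_eq_singleton huw.symm) hy).le⟩

theorem isMPSet_boxProd_image_leaves_right {x x' : α} (hx : G.neighborSet x = {x'}) (u : β) :
    (G □ H).IsMPSet ((x, ·) '' {w | H.Adj u w ∧ H.IsLeaf w}) := by
  refine isMPSet_of_subset_neighborSet (c := (x, u)) ?_ ?_
  · rintro _ ⟨w, ⟨huw, -⟩, rfl⟩
    exact boxProd_adj_right.mpr huw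
  · rintro _ ⟨w, ⟨huw, hw⟩, rfl⟩
    refine ⟨(x', w), ?_⟩
    rw [neighborSet_boxProd_of_eq_singleton hx (hw.neighborSet_eq_singleton huw.symm),
      Set.pair_comm]

theorem ncard_leaves_le_mpNum_boxProd_left [Finite α] [Finite β] {y : β} (hy : H.IsLeaf y)
    (u : α) : {w | G.Adj u w ∧ G.IsLeaf w}.ncard ≤ (G □ H).mpNum := by
  obtain ⟨y', hy'⟩ := Set.ncard_eq_one.mp hy
  rw [← Set.ncard_image_of_injective _ (Prod.mk_left_injective y)]
  exact (isMPSet_boxProd_image_leaves_left hy' u).ncard_le_mpNum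

theorem ncard_leaves_le_mpNum_boxProd_right [Finite α] [Finite β] {x : α} (hx : G.IsLeaf x)
    (u : β) : {w | H.Adj u w ∧ H.IsLeaf w}.ncard ≤ (G □ H).mpNum := by
  obtain ⟨x', hx'⟩ := Set.ncard_eq_one.mp hx
  rw [← Set.ncard_image_of_injective _ (Prod.mk_right_injective x)]
  exact (isMPSet_boxProd_image_leaves_right hx' u).ncard_le_mpNum

end SimpleGraph

theorem mpNum_boxProd_ge_maxLeafDegree_general {α β : Type*} [Fintype α] [Fintype β]
    (G : SimpleGraph α) (H : SimpleGraph β)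
    (hleafG : ∃ w : α, G.IsLeaf w) (hleafH : ∃ w : β, H.IsLeaf w) :
    max G.maxLeafDegree H.maxLeafDegree ≤ (G □ H).mpNum := by
  obtain ⟨x, hx⟩ := hleafG
  obtain ⟨y, hy⟩ := hleafH
  exact max_le (Finset.sup_le fun u _ => ncard_leaves_le_mpNum_boxProd_left hy u)
    (Finset.sup_le fun u _ => ncard_leaves_le_mpNum_boxProd_right hx u)

/-- If `G` and `H` are connected graphs of order at least three that both
contain a leaf, then `mp(G □ H) ≥ max {Δ₁(G), Δ₁(H)}`. -/
theorem mpNum_boxProd_ge_maxLeafDegree {α β : Type*} [Fintype α] [Fintype β]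
    (G : SimpleGraph α) (H : SimpleGraph β) (hG : G.Connected) (hH : H.Connected)
    (hcardG : 3 ≤ Fintype.card α) (hcardH : 3 ≤ Fintype.card β)
    (hleafG : ∃ w : α, G.IsLeaf w) (hleafH : ∃ w : β, H.IsLeaf w) :
    max G.maxLeafDegree H.maxLeafDegree ≤ (G □ H).mpNum :=
  mpNum_boxProd_ge_maxLeafDegree_general G H hleafG hleafH
end

section
/- Let G be a finite connected graph and H a finite graph. If S is a monophonic position set of the lexicographic product G ∘ H, then the projection π_G(S) = {g ∈ V(G) : (g,h) ∈ S for some h ∈ V(H)} is a monophonic position set of G. -/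
open SimpleGraph

/-- The *lexicographic product* `G ∘ H`: `(g₁,h₁)` is adjacent to `(g₂,h₂)` iff
`g₁ ~ g₂` in `G`, or `g₁ = g₂` and `h₁ ~ h₂` in `H`. -/
def SimpleGraph.lexProd {α β : Type*} (G : SimpleGraph α) (H : SimpleGraph β) :
    SimpleGraph (α × β) where
  Adj x y := G.Adj x.1 y.1 ∨ (x.1 = y.1 ∧ H.Adj x.2 y.2)
  symm := by
    constructor
    rintro x y (h | ⟨h1, h2⟩)
    · exact Or.inl h.symm
    · exact Or.inr ⟨h1.symm, h2.symm⟩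
  loopless := by
    constructor
    rintro x (h | ⟨-, h⟩)
    · exact G.irrefl h
    · exact H.irrefl h

/-
Choosing for every `g ∈ π_G(S)` one `h` with `(g, h) ∈ S` gives a section `g ↦ (g, f g)` of the
projection. Such a section is an induced embedding of `G` into `G ∘ H` (two vertices of one
fibre are never both on it), so it carries monophonic paths of `G` to monophonic paths of
`G ∘ H`, and `π_G(S)` is the preimage of `S` under it.
-/

namespace SimpleGraph

variable {V W : Type*} {G : SimpleGraph V} {G' : SimpleGraph W}

theorem Walk.IsMonophonic.map (φ : G ↪g G') {u v : V} {p : G.Walk u v}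
    (hp : p.IsMonophonic) : (p.map φ.toHom).IsMonophonic := by
  refine ⟨hp.1.map φ.injective, ?_⟩
  intro a b ha hb hab
  rw [Walk.support_map, List.mem_map] at ha hb
  obtain ⟨x, hx, rfl⟩ := ha
  obtain ⟨y, hy, rfl⟩ := hb
  rw [Walk.toSubgraph_map, Subgraph.map_adj]
  exact ⟨x, y, hp.2 x y hx hy (φ.map_adj_iff.1 hab), rfl, rfl⟩

theorem isMPSet_empty (G : SimpleGraph V) : G.IsMPSet ∅ := by
  intro u v p _
  simp

theorem IsMPSet.comap (φ : G ↪g G') {S : Set W} (hS : G'.IsMPSet S) :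
    G.IsMPSet (φ ⁻¹' S) := by
  intro u v p hp
  calc {x ∈ φ ⁻¹' S | x ∈ p.support}.ncard
      ≤ {y ∈ S | y ∈ (p.map φ.toHom).support}.ncard := by
        refine Set.ncard_le_ncard_of_injOn φ ?_ φ.injective.injOn
          ((p.map φ.toHom).support.finite_toSet.subset fun _ hy ↦ hy.2)
        rintro x ⟨hxS, hxp⟩
        exact ⟨hxS, by rw [Walk.support_map]; exact List.mem_map_of_mem hxp⟩
    _ ≤ 2 := hS _ (hp.map φ)

def lexProdSection (G : SimpleGraph V) (H : SimpleGraph W) (f : V → W) : G ↪g G.lexProd H where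
  toFun g := (g, f g)
  inj' _ _ h := congrArg Prod.fst h
  map_rel_iff' := by
    refine ⟨?_, Or.inl⟩
    rintro (hab | ⟨rfl, hf⟩)
    · exact hab
    · exact (H.irrefl hf).elim

end SimpleGraph

theorem Set.exists_preimage_graph_eq_fst_image {α β : Type*} [Nonempty β] (S : Set (α × β)) :
    ∃ f : α → β, (fun a ↦ (a, f a)) ⁻¹' S = Prod.fst '' S := by
  refine ⟨fun a ↦ Classical.epsilon fun b ↦ (a, b) ∈ S, Set.ext fun a ↦ ⟨fun h ↦ ⟨_, h, rfl⟩, ?_⟩⟩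
  rintro ⟨⟨a, b⟩, hb, rfl⟩
  exact Classical.epsilon_spec (p := fun b ↦ (a, b) ∈ S) ⟨b, hb⟩

theorem isMPSet_fst_image_of_isMPSet_lexProd_general {α β : Type*}
    (G : SimpleGraph α) (H : SimpleGraph β)
    (S : Set (α × β)) (hS : (G.lexProd H).IsMPSet S) :
    G.IsMPSet (Prod.fst '' S) := by
  rcases S.eq_empty_or_nonempty with rfl | ⟨⟨_, b⟩, -⟩
  · simpa using G.isMPSet_empty
  have : Nonempty β := ⟨b⟩
  obtain ⟨f, hf⟩ := S.exists_preimage_graph_eq_fst_image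
  rw [← hf]
  exact hS.comap (lexProdSection G H f)

/-- If `S` is a monophonic position set of the lexicographic product
`G ∘ H`, then `π_G(S)` is a monophonic position set of `G`. -/
theorem isMPSet_fst_image_of_isMPSet_lexProd {α β : Type*} [Fintype α] [Fintype β]
    (G : SimpleGraph α) (H : SimpleGraph β) (hG : G.Connected)
    (S : Set (α × β)) (hS : (G.lexProd H).IsMPSet S) :
    G.IsMPSet (Prod.fst '' S) :=
  isMPSet_fst_image_of_isMPSet_lexProd_general G H S hS
end
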